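/- Let u ∈ [0, u_max] be a constant, and let (s,i) be the solution of the controlled SIR system with constant control u and initial data i₀ ∈ (0,1), s₀ ∈ (0, 1−i₀]. Then for every t ≥ 0, i(t) = s₀ + i₀ − s(t) + (γ/(β−u))·(log s(t) − log s₀). -/

import Mathlib

open MeasureTheory Filter Set intervalIntegral
open scoped ENNReal

noncomputable section

/-- A control: a measurable (essentially bounded) function with values in `[0, umax]`. -/
def IsControl (umax : ℝ) (u : ℝ → ℝ) : Prop :=
  Measurable u ∧ ∀ t : ℝ, u t ∈ Set.Icc (0 : ℝ) umax

/-- Solution of the controlled SIR system on `[0,∞)`, in integral (i.e. locally absolutely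
continuous) form: `s' = -(β-u)·s·i`, `i' = (β-u)·s·i - γ·i` a.e., `s 0 = s₀`, `i 0 = i₀`. -/
def SIRSol (β γ : ℝ) (u s i : ℝ → ℝ) (s₀ i₀ : ℝ) : Prop :=
  Continuous s ∧ Continuous i ∧
  (∀ t : ℝ, 0 ≤ t → s t = s₀ + ∫ τ in (0:ℝ)..t, -((β - u τ) * s τ * i τ)) ∧
  (∀ t : ℝ, 0 ≤ t → i t = i₀ + ∫ τ in (0:ℝ)..t, ((β - u τ) * s τ * i τ - γ * i τ))

/-- Solution of the controlled SIR system on `[0,T]`, in integral form. -/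
def SIRSolOn (β γ T : ℝ) (u s i : ℝ → ℝ) (s₀ i₀ : ℝ) : Prop :=
  ContinuousOn s (Set.Icc 0 T) ∧ ContinuousOn i (Set.Icc 0 T) ∧
  (∀ t ∈ Set.Icc (0:ℝ) T, s t = s₀ + ∫ τ in (0:ℝ)..t, -((β - u τ) * s τ * i τ)) ∧
  (∀ t ∈ Set.Icc (0:ℝ) T, i t = i₀ + ∫ τ in (0:ℝ)..t, ((β - u τ) * s τ * i τ - γ * i τ))

/-- The triangle `T = {(s,i) ∈ (0,1]² : s + i ≤ 1}`. -/
def Triangle : Set (ℝ × ℝ) :=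
  {p | 0 < p.1 ∧ p.1 ≤ 1 ∧ 0 < p.2 ∧ p.2 ≤ 1 ∧ p.1 + p.2 ≤ 1}

/-- The curve `Φ_max`. -/
def PhiMax (β γ umax iM : ℝ) (x : ℝ) : ℝ :=
  if x < γ / (β - umax) then iM
  else γ / (β - umax) + iM - x + (γ / (β - umax)) * (Real.log x - Real.log (γ / (β - umax)))

/-- The curve `Φ₀`. -/
def Phi0 (β γ iM : ℝ) (x : ℝ) : ℝ :=
  if x < γ / β then iM
  else γ / β + iM - x + (γ / β) * (Real.log x - Real.log (γ / β))

/-- The ICU (state) constraint `i(t) ≤ i_M` for all `t ≥ 0`. -/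
def Admissible (iM : ℝ) (i : ℝ → ℝ) : Prop := ∀ t : ℝ, 0 ≤ t → i t ≤ iM

/-- Infinite-horizon cost `J^∞(u) = ∫₀^∞ (λ₁ u + λ₂ i) dt`, with values in `[0,∞]`. -/
def Cost (l1 l2 : ℝ) (u i : ℝ → ℝ) : ℝ≥0∞ :=
  ∫⁻ t in Set.Ioi (0:ℝ), ENNReal.ofReal (l1 * u t + l2 * i t)

/-- Finite-horizon cost `J^T(u) = ∫₀^T (λ₁ u + λ₂ i) dt`. -/
def CostT (l1 l2 T : ℝ) (u i : ℝ → ℝ) : ℝ≥0∞ :=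
  ∫⁻ t in Set.Ioc (0:ℝ) T, ENNReal.ofReal (l1 * u t + l2 * i t)

/-- The safe (no-effort) zone `A`. -/
def SafeZone (β γ iM : ℝ) : Set (ℝ × ℝ) :=
  {p | p ∈ Triangle ∧ ∃ s i : ℝ → ℝ,
    SIRSol β γ (fun _ => 0) s i p.1 p.2 ∧ Admissible iM i}

/-- The viable (feasible) set `B`. -/
def ViableSet (β γ umax iM : ℝ) : Set (ℝ × ℝ) :=
  {p | p ∈ Triangle ∧ ∃ u s i : ℝ → ℝ, IsControl umax u ∧
    SIRSol β γ u s i p.1 p.2 ∧ Admissible iM i}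

/-- Weak* convergence in `L^∞(0,∞)`: testing against every `L¹` function. -/
def WeakStarLim (un : ℕ → ℝ → ℝ) (u : ℝ → ℝ) : Prop :=
  ∀ g : ℝ → ℝ, MeasureTheory.IntegrableOn g (Set.Ioi 0) →
    Filter.Tendsto (fun n => ∫ t in Set.Ioi (0:ℝ), un n t * g t) Filter.atTop
      (nhds (∫ t in Set.Ioi (0:ℝ), u t * g t))

/-!
Write `k = β - c ≠ 0`. The integral equations make `s` and `i` differentiable, and `s' = -k i s`
is linear in `s`, so `s = s₀ exp (-k ∫ i)` stays positive. On positive `s` one has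
`(i + s)' = -γ i = (γ / k) (log s)'`, so `i + s - (γ / k) log s` is constant along the trajectory.
-/

open Real

theorem eq_mul_exp_integral_of_hasDerivWithinAt {g a : ℝ → ℝ} {T : ℝ}
    (hg : ContinuousOn g (Icc 0 T)) (ha : Continuous a)
    (hderiv : ∀ x ∈ Ico 0 T, HasDerivWithinAt g (a x * g x) (Ici x) x) :
    ∀ x ∈ Icc 0 T, g x = g 0 * exp (∫ τ in (0:ℝ)..x, a τ) := by
  set A : ℝ → ℝ := fun x => ∫ τ in (0:ℝ)..x, a τ
  have hA : ∀ x, HasDerivAt A (a x) x := fun x => (ha.integral_hasStrictDerivAt 0 x).hasDerivAt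
  have hG : ∀ x ∈ Icc 0 T, g x * exp (-A x) = g 0 * exp (-A 0) := by
    refine constant_of_has_deriv_right_zero (fun x hx => ?_) (fun x hx => ?_)
    · exact (hg x hx).mul ((hA x).continuousAt.neg.rexp.continuousWithinAt)
    · have := (hderiv x hx).mul ((hA x).neg.exp.hasDerivWithinAt (s := Ici x))
      exact this.congr_deriv (by ring)
  intro x hx
  have h := hG x hx
  simp only [A, integral_same, neg_zero, exp_zero, mul_one, exp_neg] at h
  field_simp at h
  linear_combination h

theorem hasDerivWithinAt_Ici_of_eq_add_integral {f g : ℝ → ℝ} {a : ℝ} (hf : Continuous f)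
    (hg : ∀ t, 0 ≤ t → g t = a + ∫ τ in (0:ℝ)..t, f τ) {x : ℝ} (hx : 0 ≤ x) :
    HasDerivWithinAt g (f x) (Ici x) x :=
  ((hf.integral_hasStrictDerivAt 0 x).hasDerivAt.const_add a).hasDerivWithinAt.congr
    (fun y hy => hg y (hx.trans hy)) (hg x hx)

namespace SIRSol

variable {β γ s₀ i₀ : ℝ} {u s i : ℝ → ℝ}

theorem s_zero (hsol : SIRSol β γ u s i s₀ i₀) : s 0 = s₀ := by
  simpa using hsol.2.2.1 0 le_rfl

theorem i_zero (hsol : SIRSol β γ u s i s₀ i₀) : i 0 = i₀ := by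
  simpa using hsol.2.2.2 0 le_rfl

theorem hasDerivWithinAt_s (hsol : SIRSol β γ u s i s₀ i₀) (hu : Continuous u) {x : ℝ}
    (hx : 0 ≤ x) : HasDerivWithinAt s (-((β - u x) * s x * i x)) (Ici x) x :=
  hasDerivWithinAt_Ici_of_eq_add_integral
    (((continuous_const.sub hu).mul hsol.1).mul hsol.2.1).neg hsol.2.2.1 hx

theorem hasDerivWithinAt_i (hsol : SIRSol β γ u s i s₀ i₀) (hu : Continuous u) {x : ℝ}
    (hx : 0 ≤ x) : HasDerivWithinAt i ((β - u x) * s x * i x - γ * i x) (Ici x) x :=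
  hasDerivWithinAt_Ici_of_eq_add_integral
    ((((continuous_const.sub hu).mul hsol.1).mul hsol.2.1).sub (continuous_const.mul hsol.2.1))
    hsol.2.2.2 hx

theorem s_eq_mul_exp (hsol : SIRSol β γ u s i s₀ i₀) (hu : Continuous u) {t : ℝ} (ht : 0 ≤ t) :
    s t = s₀ * exp (∫ τ in (0:ℝ)..t, -((β - u τ) * i τ)) := by
  rw [← hsol.s_zero]
  refine eq_mul_exp_integral_of_hasDerivWithinAt (a := fun τ => -((β - u τ) * i τ))
    hsol.1.continuousOn ((continuous_const.sub hu).mul hsol.2.1).neg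
    (fun x hx => ?_) t ⟨ht, le_rfl⟩
  exact (hsol.hasDerivWithinAt_s hu hx.1).congr_deriv (by ring)

theorem s_pos (hsol : SIRSol β γ u s i s₀ i₀) (hu : Continuous u) (hs₀ : 0 < s₀) {t : ℝ}
    (ht : 0 ≤ t) : 0 < s t := by
  rw [hsol.s_eq_mul_exp hu ht]
  positivity

theorem i_add_s_sub_mul_log_s_eq {c : ℝ} (hsol : SIRSol β γ (fun _ => c) s i s₀ i₀) (hc : β - c ≠ 0)
    (hs₀ : 0 < s₀) {t : ℝ} (ht : 0 ≤ t) :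
    i t + s t - γ / (β - c) * log (s t) = i₀ + s₀ - γ / (β - c) * log s₀ := by
  have hs_ne : ∀ x, 0 ≤ x → s x ≠ 0 := fun x hx => (hsol.s_pos continuous_const hs₀ hx).ne'
  have hconst := constant_of_has_deriv_right_zero
    (f := fun x => i x + s x - γ / (β - c) * log (s x)) (a := 0) (b := t) ?_ ?_ t ⟨ht, le_rfl⟩
  · simpa only [hsol.s_zero, hsol.i_zero] using hconst
  · exact (hsol.2.1.continuousOn.add hsol.1.continuousOn).sub
      (continuousOn_const.mul (hsol.1.continuousOn.log fun x hx => hs_ne x hx.1))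
  · intro x hx
    have hs := hsol.hasDerivWithinAt_s continuous_const hx.1
    have hi := hsol.hasDerivWithinAt_i continuous_const hx.1
    refine ((hi.add hs).sub ((hs.log (hs_ne x hx.1)).const_mul _)).congr_deriv ?_
    field_simp [hs_ne x hx.1]
    ring

end SIRSol

theorem statement6_general (β γ umax : ℝ) (humaxβ : umax < β)
    (c : ℝ) (hc : c ∈ Set.Icc (0:ℝ) umax)
    (i₀ s₀ : ℝ) (hs₀ : s₀ ∈ Set.Ioc (0:ℝ) (1 - i₀))
    (s i : ℝ → ℝ) (hsol : SIRSol β γ (fun _ => c) s i s₀ i₀) :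
    ∀ t : ℝ, 0 ≤ t →
      i t = s₀ + i₀ - s t + (γ / (β - c)) * (Real.log (s t) - Real.log s₀) := by
  intro t ht
  have hβc : β - c ≠ 0 := (sub_pos.2 (hc.2.trans_lt humaxβ)).ne'
  linear_combination hsol.i_add_s_sub_mul_log_s_eq hβc hs₀.1 ht

/-- For a constant control `u ≡ c`, the trajectory satisfies
`i = s₀ + i₀ - s + (γ/(β-c))·(log s - log s₀)`. -/
theorem statement6 (β γ umax : ℝ) (hβ : 0 < β) (hγ : 0 < γ)
    (humax : 0 < umax) (humaxβ : umax < β)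
    (c : ℝ) (hc : c ∈ Set.Icc (0:ℝ) umax)
    (i₀ s₀ : ℝ) (hi₀ : i₀ ∈ Set.Ioo (0:ℝ) 1) (hs₀ : s₀ ∈ Set.Ioc (0:ℝ) (1 - i₀))
    (s i : ℝ → ℝ) (hsol : SIRSol β γ (fun _ => c) s i s₀ i₀) :
    ∀ t : ℝ, 0 ≤ t →
      i t = s₀ + i₀ - s t + (γ / (β - c)) * (Real.log (s t) - Real.log s₀) :=
  statement6_general β γ umax humaxβ c hc i₀ s₀ hs₀ s i hsol
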